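/- Let d ≥ 2 be an integer, 1 < α < 2, 0 < γ ≤ 2. There exists a constant N > 0, depending only on d, α, γ, such that for every nonnegative f ∈ C_c(ℝ^{d+1}), every (t,x) ∈ ℝ × ℝ^d and every ρ > 0, P_γ(1_{C_ρ(t,x)} f)(t,x) ≤ N ρ^{αγ/2} M f(t,x). -/

import Mathlib

open MeasureTheory ENNReal Set Filter

noncomputable section

/-- The spatial space `ℝ^d`. -/
abbrev Spc (d : ℕ) := EuclideanSpace ℝ (Fin d)

/-- Parabolic cylinder `C_ρ(t,x) = {(s,y) : t ≤ s ≤ t + ρ^α, |y - x| ≤ ρ}`. -/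
def cylP (d : ℕ) (α ρ t : ℝ) (x : Spc d) : Set (ℝ × Spc d) :=
  {p | t ≤ p.1 ∧ p.1 ≤ t + ρ ^ α ∧ dist p.2 x ≤ ρ}

/-- Average of `f` over the parabolic cylinder `C_ρ(t,x)`. -/
def cylAvg (d : ℕ) (α ρ t : ℝ) (x : Spc d) (f : ℝ × Spc d → ℝ≥0∞) : ℝ≥0∞ :=
  (volume (cylP d α ρ t x))⁻¹ * ∫⁻ p in cylP d α ρ t x, f p

/-- Parabolic Morrey norm `‖v‖_{E_q}`. -/
def morreyE (d : ℕ) (α q : ℝ) (v : ℝ × Spc d → ℝ≥0∞) : ℝ≥0∞ :=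
  ⨆ (ρ : ℝ) (_ : 0 < ρ) (t : ℝ) (x : Spc d),
    ENNReal.ofReal ρ * (cylAvg d α ρ t x (fun p => v p ^ q)) ^ (1 / q)

/-- Elliptic Morrey norm `‖w‖_{M_q}` on `ℝ^d`. -/
def morreyM (d : ℕ) (q : ℝ) (w : Spc d → ℝ≥0∞) : ℝ≥0∞ :=
  ⨆ (ρ : ℝ) (_ : 0 < ρ) (x : Spc d),
    ENNReal.ofReal ρ *
      ((volume (Metric.closedBall x ρ))⁻¹ *
        ∫⁻ y in Metric.closedBall x ρ, w y ^ q) ^ (1 / q)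

/-- Fractional (parabolic) maximal function `M_β f(t,x)`. -/
def maxFun (d : ℕ) (α β : ℝ) (f : ℝ × Spc d → ℝ≥0∞) (t : ℝ) (x : Spc d) : ℝ≥0∞ :=
  ⨆ (ρ : ℝ) (_ : 0 < ρ), ENNReal.ofReal (ρ ^ β) * cylAvg d α ρ t x f

/-- Uncentered parabolic maximal function `M̂ f(z)`, sup over all parabolic
cylinders containing `z`. -/
def hatM (d : ℕ) (α : ℝ) (f : ℝ × Spc d → ℝ≥0∞) (z : ℝ × Spc d) : ℝ≥0∞ :=
  ⨆ (ρ : ℝ) (_ : 0 < ρ) (t : ℝ) (x : Spc d) (_ : z ∈ cylP d α ρ t x),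
    cylAvg d α ρ t x f

/-- The kernel `p_γ(s,y) = 1_{s>0} s^{γ/2} min(|y|^{-d-α}, s^{-(d+α)/α})`. -/
def pKer (d : ℕ) (α γ : ℝ) (s : ℝ) (y : Spc d) : ℝ≥0∞ :=
  if 0 < s then
    (if s ^ (1 / α) ≤ ‖y‖ then ENNReal.ofReal (s ^ (γ / 2) * ‖y‖ ^ (-(d : ℝ) - α))
     else ENNReal.ofReal (s ^ (γ / 2 - ((d : ℝ) + α) / α)))
  else 0

/-- `P_γ f(t,x) = ∫ p_γ(s,y) f(t+s, x+y) dy ds`. -/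
def Pop (d : ℕ) (α γ : ℝ) (f : ℝ × Spc d → ℝ≥0∞) (t : ℝ) (x : Spc d) : ℝ≥0∞ :=
  ∫⁻ p : ℝ × Spc d, pKer d α γ p.1 p.2 * f (t + p.1, x + p.2)

/-- `P*_γ f(t,x) = ∫ p_γ(s,y) f(t-s, x+y) dy ds`. -/
def PopStar (d : ℕ) (α γ : ℝ) (f : ℝ × Spc d → ℝ≥0∞) (t : ℝ) (x : Spc d) : ℝ≥0∞ :=
  ∫⁻ p : ℝ × Spc d, pKer d α γ p.1 p.2 * f (t - p.1, x + p.2)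

/-!
On `C_ρ(t,x)` the kernel `p_γ(s,y)` is at most `q ^ (αγ/2 - d - α)`, where
`q = max (s ^ (1/α)) |y|` is the parabolic distance of `(s,y)` from the origin, and the
exponent is `≤ 0`. Cut the cylinder into the dyadic shells `ρ 2^-(k+1) < q ≤ ρ 2^-k`. Shell `k`
lies in `C_{ρ 2^-k}(t,x)`, on which the mean of `f` is at most `M f(t,x)` and whose volume is
`|B_1| (ρ 2^-k)^(d+α)`, so it contributes at most a constant times `(ρ 2^-k)^(αγ/2) M f(t,x)`:
a geometric series because `αγ > 0`.
-/

lemma cylP_eq_prod (d : ℕ) (α r t : ℝ) (x : Spc d) :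
    cylP d α r t x = Icc t (t + r ^ α) ×ˢ Metric.closedBall x r := by
  ext p
  simp only [cylP, mem_ofPred_eq, mem_prod, mem_Icc, Metric.mem_closedBall, and_assoc]

lemma measurableSet_cylP (d : ℕ) (α r t : ℝ) (x : Spc d) :
    MeasurableSet (cylP d α r t x) := by
  rw [cylP_eq_prod]
  exact measurableSet_Icc.prod measurableSet_closedBall

lemma volume_cylP (d : ℕ) (α t : ℝ) (x : Spc d) {r : ℝ} (hr : 0 < r) :
    volume (cylP d α r t x) =
      ENNReal.ofReal (r ^ (α + d)) * volume (Metric.ball (0 : Spc d) 1) := by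
  rw [cylP_eq_prod, Measure.volume_eq_prod, Measure.prod_prod, Real.volume_Icc,
    Measure.addHaar_closedBall _ _ hr.le, finrank_euclideanSpace_fin, add_sub_cancel_left,
    ← mul_assoc, ← ENNReal.ofReal_mul (by positivity), Real.rpow_add hr, Real.rpow_natCast]

lemma mem_cylP_zero {d : ℕ} {α r : ℝ} {p : ℝ × Spc d} :
    p ∈ cylP d α r 0 0 ↔ 0 ≤ p.1 ∧ p.1 ≤ r ^ α ∧ ‖p.2‖ ≤ r := by
  simp [cylP]

lemma shift_mem_cylP_iff (d : ℕ) (α r t : ℝ) (x : Spc d) (p : ℝ × Spc d) :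
    (t + p.1, x + p.2) ∈ cylP d α r t x ↔ p ∈ cylP d α r 0 0 := by
  simp [cylP, dist_eq_norm]

lemma setLIntegral_cylP_shift (d : ℕ) (α r t : ℝ) (x : Spc d) {g : ℝ × Spc d → ℝ≥0∞}
    (hg : Measurable g) :
    ∫⁻ p in cylP d α r 0 0, g (t + p.1, x + p.2) = ∫⁻ z in cylP d α r t x, g z := by
  have hshift : MeasurePreserving (fun p : ℝ × Spc d => (t + p.1, x + p.2)) := by
    have h := (measurePreserving_add_left volume t).prod (measurePreserving_add_left volume x)
    rwa [← Measure.volume_eq_prod] at h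
  rw [← hshift.setLIntegral_comp_preimage (measurableSet_cylP d α r t x) hg]
  congr 2
  ext p
  exact (shift_mem_cylP_iff d α r t x p).symm

lemma setLIntegral_cylP_le_volume_mul_maxFun (d : ℕ) (α t : ℝ) (x : Spc d) {r : ℝ}
    (hr : 0 < r) (g : ℝ × Spc d → ℝ≥0∞) :
    ∫⁻ z in cylP d α r t x, g z ≤ volume (cylP d α r t x) * maxFun d α 0 g t x := by
  have hvol := volume_cylP d α t x hr
  have hvol0 : volume (cylP d α r t x) ≠ 0 := by
    rw [hvol]
    exact mul_ne_zero (by simpa using Real.rpow_pos_of_pos hr _)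
      (Metric.measure_ball_pos _ _ one_pos).ne'
  have hvolTop : volume (cylP d α r t x) ≠ ⊤ := by
    rw [hvol]
    exact ENNReal.mul_ne_top ENNReal.ofReal_ne_top measure_ball_lt_top.ne
  calc ∫⁻ z in cylP d α r t x, g z = volume (cylP d α r t x) * cylAvg d α r t x g := by
        rw [cylAvg, ← mul_assoc, ENNReal.mul_inv_cancel hvol0 hvolTop, one_mul]
    _ ≤ volume (cylP d α r t x) * maxFun d α 0 g t x := by
        gcongr
        refine le_trans (le_of_eq ?_) (le_iSup₂ (f := fun r (_ : 0 < r) =>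
          ENNReal.ofReal (r ^ (0 : ℝ)) * cylAvg d α r t x g) r hr)
        simp

lemma pKer_le_rpow_max (d : ℕ) {α γ s : ℝ} (hα : 0 < α) (hγ : 0 ≤ γ) (hs : 0 < s)
    (y : Spc d) :
    pKer d α γ s y ≤ ENNReal.ofReal ((max (s ^ (1 / α)) ‖y‖) ^ (α * γ / 2 - d - α)) := by
  have hsα : 0 < s ^ (1 / α) := Real.rpow_pos_of_pos hs _
  rw [pKer, if_pos hs]
  split_ifs with hsy
  · have hy : 0 < ‖y‖ := hsα.trans_le hsy
    rw [max_eq_right hsy, show α * γ / 2 - d - α = α * γ / 2 + (-(d : ℝ) - α) by ring,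
      Real.rpow_add hy]
    gcongr
    calc s ^ (γ / 2) = (s ^ (1 / α)) ^ (α * γ / 2) := by
          rw [← Real.rpow_mul hs.le]; field_simp
      _ ≤ ‖y‖ ^ (α * γ / 2) := by gcongr
  · rw [max_eq_left (not_le.mp hsy).le, ← Real.rpow_mul hs.le]
    refine le_of_eq (congrArg _ (congrArg _ ?_))
    field_simp
    ring

lemma pKer_le_tsum_indicator_dyadic (d : ℕ) {α γ ρ : ℝ} (hα : 0 < α) (hγ : 0 ≤ γ)
    (he : α * γ / 2 ≤ d + α) (hρ : 0 < ρ) {p : ℝ × Spc d} (hp : p ∈ cylP d α ρ 0 0) :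
    pKer d α γ p.1 p.2 ≤ ∑' k : ℕ, (cylP d α (ρ / 2 ^ k) 0 0).indicator
      (fun _ => ENNReal.ofReal ((ρ / 2 ^ (k + 1)) ^ (α * γ / 2 - d - α))) p := by
  obtain ⟨s, y⟩ := p
  rcases le_or_gt s 0 with hs | hs
  · simp [pKer, hs.not_gt]
  obtain ⟨-, hsρ, hyρ⟩ := mem_cylP_zero.1 hp
  have hroot {r : ℝ} (hr : 0 ≤ r) : s ^ (1 / α) ≤ r ↔ s ≤ r ^ α := by
    rw [one_div, Real.rpow_inv_le_iff_of_pos hs.le hr hα]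
  set q := max (s ^ (1 / α)) ‖y‖
  have hq : 0 < q := (Real.rpow_pos_of_pos hs _).trans_le (le_max_left _ _)
  have hqρ : q ≤ ρ := max_le ((hroot hρ.le).2 hsρ) hyρ
  obtain ⟨k, hk, hk'⟩ := exists_nat_pow_near ((one_le_div hq).2 hqρ) one_lt_two
  have hqk : q ≤ ρ / 2 ^ k := by
    rw [le_div_iff₀ (by positivity), mul_comm]; exact (le_div_iff₀ hq).1 hk
  have hkq : ρ / 2 ^ (k + 1) < q := by
    rw [div_lt_iff₀ (by positivity), mul_comm]; exact (div_lt_iff₀ hq).1 hk'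
  have hmem : (s, y) ∈ cylP d α (ρ / 2 ^ k) 0 0 :=
    mem_cylP_zero.2 ⟨hs.le, (hroot (by positivity)).1 ((le_max_left _ _).trans hqk),
      (le_max_right _ _).trans hqk⟩
  refine le_trans ?_ (ENNReal.le_tsum k)
  rw [indicator_of_mem hmem]
  refine (pKer_le_rpow_max d hα hγ hs y).trans (ENNReal.ofReal_le_ofReal ?_)
  exact Real.rpow_le_rpow_of_nonpos (by positivity) hkq.le (by linarith)

lemma Pop_indicator_cylP_le_tsum (d : ℕ) {α γ ρ : ℝ} (hα : 0 < α) (hγ : 0 ≤ γ)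
    (he : α * γ / 2 ≤ d + α) (hρ : 0 < ρ) {g : ℝ × Spc d → ℝ≥0∞} (hg : Measurable g)
    (t : ℝ) (x : Spc d) :
    Pop d α γ ((cylP d α ρ t x).indicator g) t x ≤
      ∑' k : ℕ, ENNReal.ofReal ((ρ / 2 ^ (k + 1)) ^ (α * γ / 2 - d - α)) *
        ∫⁻ z in cylP d α (ρ / 2 ^ k) t x, g z := by
  set c : ℕ → ℝ≥0∞ := fun k => ENNReal.ofReal ((ρ / 2 ^ (k + 1)) ^ (α * γ / 2 - d - α))
  set gₜ : ℝ × Spc d → ℝ≥0∞ := fun p => g (t + p.1, x + p.2)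
  have hgₜ : Measurable gₜ := hg.comp (by fun_prop)
  have hpt (p : ℝ × Spc d) : pKer d α γ p.1 p.2 * (cylP d α ρ t x).indicator g (t + p.1, x + p.2)
      ≤ ∑' k, (cylP d α (ρ / 2 ^ k) 0 0).indicator (fun p => c k * gₜ p) p := by
    by_cases hp : p ∈ cylP d α ρ 0 0
    · rw [indicator_of_mem ((shift_mem_cylP_iff d α ρ t x p).2 hp)]
      calc pKer d α γ p.1 p.2 * gₜ p
          ≤ (∑' k, (cylP d α (ρ / 2 ^ k) 0 0).indicator (fun _ => c k) p) * gₜ p := by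
            gcongr; exact pKer_le_tsum_indicator_dyadic d hα hγ he hρ hp
        _ = _ := by
            rw [← ENNReal.tsum_mul_right]
            congr 1 with k
            exact (indicator_mul_left _ _ _).symm
    · simp [indicator_of_notMem (mt (shift_mem_cylP_iff d α ρ t x p).1 hp)]
  calc Pop d α γ ((cylP d α ρ t x).indicator g) t x
      ≤ ∫⁻ p, ∑' k, (cylP d α (ρ / 2 ^ k) 0 0).indicator (fun p => c k * gₜ p) p :=
        lintegral_mono hpt
    _ = ∑' k, ∫⁻ p, (cylP d α (ρ / 2 ^ k) 0 0).indicator (fun p => c k * gₜ p) p :=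
        lintegral_tsum fun k =>
          ((hgₜ.const_mul _).indicator (measurableSet_cylP ..)).aemeasurable
    _ = ∑' k, c k * ∫⁻ z in cylP d α (ρ / 2 ^ k) t x, g z := by
        congr 1 with k
        rw [lintegral_indicator (measurableSet_cylP ..), lintegral_const_mul _ hgₜ,
          setLIntegral_cylP_shift d α _ t x hg]

lemma tsum_ofReal_rpow_dyadic {ρ : ℝ} (hρ : 0 < ρ) (e a : ℝ) (hea : 0 < e + a) :
    ∑' k : ℕ, ENNReal.ofReal ((ρ / 2 ^ (k + 1)) ^ e * (ρ / 2 ^ k) ^ a) =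
      ENNReal.ofReal ((2 ^ e)⁻¹ * (1 - (2 ^ (e + a))⁻¹)⁻¹ * ρ ^ (e + a)) := by
  have hterm (k : ℕ) : (ρ / 2 ^ (k + 1)) ^ e * (ρ / 2 ^ k) ^ a =
      (2 ^ e)⁻¹ * ρ ^ (e + a) * ((2 ^ (e + a))⁻¹) ^ k := by
    rw [pow_succ, ← div_div, Real.div_rpow (by positivity) zero_le_two, div_eq_mul_inv _ (2 ^ e),
      mul_right_comm, ← Real.rpow_add (by positivity), Real.div_rpow hρ.le (by positivity),
      ← Real.rpow_pow_comm zero_le_two, inv_pow]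
    ring
  have hr : (2 ^ (e + a))⁻¹ < (1 : ℝ) := inv_lt_one_of_one_lt₀ (Real.one_lt_rpow one_lt_two hea)
  have hsum := ((hasSum_geometric_of_lt_one (by positivity) hr).mul_left
    ((2 ^ e)⁻¹ * ρ ^ (e + a)))
  simp_rw [hterm]
  rw [← ENNReal.ofReal_tsum_of_nonneg (fun k => by positivity) hsum.summable, hsum.tsum_eq]
  ring_nf

lemma Pop_indicator_cylP_le_maxFun (d : ℕ) {α γ ρ : ℝ} (hα : 0 < α) (hγ : 0 < γ)
    (he : α * γ / 2 ≤ d + α) (hρ : 0 < ρ) {g : ℝ × Spc d → ℝ≥0∞} (hg : Measurable g)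
    (t : ℝ) (x : Spc d) :
    Pop d α γ ((cylP d α ρ t x).indicator g) t x ≤
      ENNReal.ofReal ((2 ^ (α * γ / 2 - d - α))⁻¹ * (1 - (2 ^ (α * γ / 2))⁻¹)⁻¹ *
        ρ ^ (α * γ / 2)) * volume (Metric.ball (0 : Spc d) 1) * maxFun d α 0 g t x := by
  calc Pop d α γ ((cylP d α ρ t x).indicator g) t x
      ≤ ∑' k : ℕ, ENNReal.ofReal ((ρ / 2 ^ (k + 1)) ^ (α * γ / 2 - d - α)) *
          ∫⁻ z in cylP d α (ρ / 2 ^ k) t x, g z :=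
        Pop_indicator_cylP_le_tsum d hα hγ.le he hρ hg t x
    _ ≤ ∑' k : ℕ, ENNReal.ofReal ((ρ / 2 ^ (k + 1)) ^ (α * γ / 2 - d - α)) *
          (volume (cylP d α (ρ / 2 ^ k) t x) * maxFun d α 0 g t x) := by
        gcongr with k
        exact setLIntegral_cylP_le_volume_mul_maxFun d α t x (by positivity) g
    _ = (∑' k : ℕ, ENNReal.ofReal
          ((ρ / 2 ^ (k + 1)) ^ (α * γ / 2 - d - α) * (ρ / 2 ^ k) ^ (α + d))) *
          volume (Metric.ball (0 : Spc d) 1) * maxFun d α 0 g t x := by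
        rw [← ENNReal.tsum_mul_right, ← ENNReal.tsum_mul_right]
        congr 1 with k
        rw [volume_cylP d α t x (by positivity), ENNReal.ofReal_mul (by positivity)]
        ring
    _ = _ := by
        have hexp : α * γ / 2 - d - α + (α + d) = α * γ / 2 := by ring
        rw [tsum_ofReal_rpow_dyadic hρ _ _ (by rw [hexp]; positivity), hexp]

theorem stmt_2_general (d : ℕ) (α γ : ℝ) (hα1 : 1 < α)
    (hγ1 : 0 < γ) (hγ2 : γ ≤ 2) :
    ∃ N : ℝ, 0 < N ∧
      ∀ (f : ℝ × Spc d → ℝ), Continuous f → HasCompactSupport f → (∀ z, 0 ≤ f z) →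
      ∀ (t : ℝ) (x : Spc d) (ρ : ℝ), 0 < ρ →
      Pop d α γ
          (fun z => Set.indicator (cylP d α ρ t x) (fun w => ENNReal.ofReal (f w)) z) t x ≤
        ENNReal.ofReal (N * ρ ^ (α * γ / 2)) *
          maxFun d α 0 (fun z => ENNReal.ofReal (f z)) t x := by
  have hα : 0 < α := one_pos.trans hα1
  have he : α * γ / 2 ≤ d + α := by
    have := mul_le_mul_of_nonneg_left hγ2 hα.le
    linarith [(d.cast_nonneg : (0 : ℝ) ≤ d)]
  set B := volume (Metric.ball (0 : Spc d) 1)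
  have hB : B ≠ ⊤ := measure_ball_lt_top.ne
  set C : ℝ := (2 ^ (α * γ / 2 - d - α))⁻¹ * (1 - (2 ^ (α * γ / 2))⁻¹)⁻¹
  have hC : 0 < C := by
    have hβ : 0 < α * γ / 2 := by positivity
    have := sub_pos.2 (inv_lt_one_of_one_lt₀ (Real.one_lt_rpow one_lt_two hβ))
    positivity
  refine ⟨C * B.toReal,
    mul_pos hC (ENNReal.toReal_pos (Metric.measure_ball_pos _ _ one_pos).ne' hB), ?_⟩
  intro f hf _ _ t x ρ hρ
  refine (Pop_indicator_cylP_le_maxFun d hα hγ1 he hρ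
    (ENNReal.measurable_ofReal.comp hf.measurable) t x).trans_eq ?_
  rw [mul_right_comm C, ENNReal.ofReal_mul (p := C * _) (by positivity),
    ENNReal.ofReal_toReal hB]
  rfl

/-- near-field bound for `P_γ` applied to `f` cut off inside the cylinder
`C_ρ(t,x)`: `P_γ(1_{C_ρ(t,x)} f)(t,x) ≤ N ρ^{αγ/2} M f(t,x)`. -/
theorem stmt_2 (d : ℕ) (hd : 2 ≤ d) (α γ : ℝ) (hα1 : 1 < α) (hα2 : α < 2)
    (hγ1 : 0 < γ) (hγ2 : γ ≤ 2) :
    ∃ N : ℝ, 0 < N ∧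
      ∀ (f : ℝ × Spc d → ℝ), Continuous f → HasCompactSupport f → (∀ z, 0 ≤ f z) →
      ∀ (t : ℝ) (x : Spc d) (ρ : ℝ), 0 < ρ →
      Pop d α γ
          (fun z => Set.indicator (cylP d α ρ t x) (fun w => ENNReal.ofReal (f w)) z) t x ≤
        ENNReal.ofReal (N * ρ ^ (α * γ / 2)) *
          maxFun d α 0 (fun z => ENNReal.ofReal (f z)) t x :=
  stmt_2_general d α γ hα1 hγ1 hγ2
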